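/- For β ∈ (0, π) let A_β := {(x,y) ∈ (−π/2, π/2)² : x + β ≥ y ≥ x − β and −x + (π−β) ≥ y ≥ −x − (π−β)}, let ℝ⁴₀ := {(x₁,x₂,x₃,x₄) ∈ ℝ⁴ : x₁ > 0 and x₃ > 0}, and let 𝒜_β := {(l₀, ε₀, l₁, ε₁) ∈ ℝ⁴₀ : (arctan(ε₀/l₀), arctan(ε₁/l₁)) ∈ A_β}. Pick a_i > 0 for i = 1,…,4, b₁ > 0, b₂ ∈ ℝ, and a subset ℬ ⊂ ℝ⁴₀, and suppose there is a β ∈ (0,π) so that ℬ is precisely the set of (x₁,x₂,x₃,x₄) ∈ ℝ⁴₀ for which (a₁x₁ + b₁, a₂x₂ + b₂, a₃x₃, a₄x₄) ∈ 𝒜_β. Then β, b₁/a₁, and b₂/a₂ are uniquely determined by ℬ; and if this unique β is not π/2, then b₁/a₂ and b₂/a₁ are also uniquely determined by ℬ. -/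

import Mathlib

open Real Set

noncomputable section

/-- The planar region `A_β ⊆ (−π/2, π/2)²`. -/
def Abeta (β : ℝ) : Set (ℝ × ℝ) :=
  {q | q.1 ∈ Ioo (-(π / 2)) (π / 2) ∧ q.2 ∈ Ioo (-(π / 2)) (π / 2) ∧
    q.2 ≤ q.1 + β ∧ q.1 - β ≤ q.2 ∧ q.2 ≤ -q.1 + (π - β) ∧ -q.1 - (π - β) ≤ q.2}

/-- `ℝ⁴₀ = {(x₁,x₂,x₃,x₄) : x₁ > 0, x₃ > 0}`. -/
def R40 : Set (ℝ × ℝ × ℝ × ℝ) := {x | 0 < x.1 ∧ 0 < x.2.2.1}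

/-- The set `𝒜_β` of quadruples `(l₀,ε₀,l₁,ε₁) ∈ ℝ⁴₀` with
`(arctan(ε₀/l₀), arctan(ε₁/l₁)) ∈ A_β`  (by the paper's Lemma, exactly the data
of trivial self-similar templates with angle `β`). -/
def calA (β : ℝ) : Set (ℝ × ℝ × ℝ × ℝ) :=
  {x | x ∈ R40 ∧ (arctan (x.2.1 / x.1), arctan (x.2.2.2 / x.2.2.1)) ∈ Abeta β}

set_option maxHeartbeats 1000000

namespace S19

def P (β u v : ℝ) : Prop :=
  v ≤ u + β ∧ u - β ≤ v ∧ v ≤ -u + (π - β) ∧ -u - (π - β) ≤ v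

lemma P_swap {β u v : ℝ} (h : P β u v) : P β v u := by
  obtain ⟨h1, h2, h3, h4⟩ := h
  exact ⟨by linarith, by linarith, by linarith, by linarith⟩

lemma P_neg {β u v : ℝ} (h : P β u v) : P β (-u) (-v) := by
  obtain ⟨h1, h2, h3, h4⟩ := h
  exact ⟨by linarith, by linarith, by linarith, by linarith⟩

lemma corner {β β' p₁ q₁ p₂ q₂ : ℝ} (hβ : β ∈ Ioo 0 π) (hβ' : β' ∈ Ioo 0 π)
    (hp₂ : 0 < p₂)
    (H : ∀ X Y : ℝ, P β (arctan X) (arctan Y) →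
      P β' (arctan (p₁ * X + q₁)) (arctan (p₂ * Y + q₂))) :
    arctan (p₁ * tan (π / 2 - β) + q₁) = π / 2 - β' := by
  obtain ⟨hβ0, hβπ⟩ := hβ
  obtain ⟨hβ'0, hβ'π⟩ := hβ'
  have hpi := Real.pi_pos
  set u₀ : ℝ := π / 2 - β with hu₀
  have hu₀m : -(π/2) < u₀ := by rw [hu₀]; linarith
  have hu₀M : u₀ < π/2 := by rw [hu₀]; linarith
  set h₀ : ℝ := arctan (p₁ * tan u₀ + q₁) with hh₀
  have hh₀m : -(π/2) < h₀ := neg_pi_div_two_lt_arctan _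
  have hh₀M : h₀ < π/2 := arctan_lt_pi_div_two _
  set vb : ℝ := max (max (u₀ - β) (-u₀ - (π - β))) 0 with hvb
  have hvb0 : 0 ≤ vb := le_max_right _ _
  have hvbM : vb < π/2 := by
    rw [hvb]
    apply max_lt (max_lt (by rw [hu₀]; linarith) (by rw [hu₀]; linarith)) (by linarith)
  have hvbI : vb ∈ Ioo (-(π/2)) (π/2) := ⟨by linarith, hvbM⟩
  set g₀ : ℝ := arctan (p₂ * tan vb + q₂) with hg₀
  have hg₀m : -(π/2) < g₀ := neg_pi_div_two_lt_arctan _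
  have hg₀M : g₀ < π/2 := arctan_lt_pi_div_two _
  have key : ∀ w : ℝ, g₀ < w → w < π/2 → w ≤ h₀ + β' ∧ w ≤ -h₀ + (π - β') := by
    intro w hw1 hw2
    have hwI : w ∈ Ioo (-(π/2)) (π/2) := ⟨by linarith, hw2⟩
    have htw : p₂ * tan vb + q₂ < tan w := by
      have := Real.strictMonoOn_tan ⟨hg₀m, hg₀M⟩ hwI hw1
      rwa [hg₀, Real.tan_arctan] at this
    set Y : ℝ := (tan w - q₂) / p₂ with hY
    have hYv : tan vb < Y := by
      rw [hY, lt_div_iff₀ hp₂]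
      linarith [mul_comm (tan vb) p₂]
    have hvI : arctan Y ∈ Ioo (-(π/2)) (π/2) :=
      ⟨neg_pi_div_two_lt_arctan _, arctan_lt_pi_div_two _⟩
    have hvb_lt : vb < arctan Y := by
      have : arctan (tan vb) < arctan Y := Real.arctan_strictMono hYv
      rwa [Real.arctan_tan hvbI.1 hvbI.2] at this
    have hmem : P β (arctan (tan u₀)) (arctan Y) := by
      rw [Real.arctan_tan hu₀m hu₀M]
      refine ⟨?_, ?_, ?_, ?_⟩
      · have : u₀ + β = π/2 := by rw [hu₀]; ring
        rw [this]; exact le_of_lt hvI.2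
      · have h1 : u₀ - β ≤ vb := le_trans (le_max_left _ _) (le_max_left _ _)
        linarith
      · have : -u₀ + (π - β) = π/2 := by rw [hu₀]; ring
        rw [this]; exact le_of_lt hvI.2
      · have h1 : -u₀ - (π - β) ≤ vb := le_trans (le_max_right _ _) (le_max_left _ _)
        linarith
    have hres := H (tan u₀) Y hmem
    have hYw : p₂ * Y + q₂ = tan w := by
      rw [hY]; field_simp; ring
    rw [hYw, Real.arctan_tan hwI.1 hwI.2] at hres
    exact ⟨hres.1, hres.2.2.1⟩
  have h1 : π/2 ≤ h₀ + β' := by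
    by_contra hc
    push_neg at hc
    set w : ℝ := (max g₀ (h₀ + β') + π/2) / 2 with hw
    have hmax : max g₀ (h₀ + β') < π/2 := max_lt hg₀M hc
    have hw2 : w < π/2 := by rw [hw]; linarith
    have hw1 : g₀ < w := by
      have := le_max_left g₀ (h₀ + β'); rw [hw]; linarith
    have hw3 : h₀ + β' < w := by
      have := le_max_right g₀ (h₀ + β'); rw [hw]; linarith
    exact absurd ((key w hw1 hw2).1) (by linarith)
  have h2 : π/2 ≤ -h₀ + (π - β') := by
    by_contra hc
    push_neg at hc
    set w : ℝ := (max g₀ (-h₀ + (π - β')) + π/2) / 2 with hw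
    have hmax : max g₀ (-h₀ + (π - β')) < π/2 := max_lt hg₀M hc
    have hw2 : w < π/2 := by rw [hw]; linarith
    have hw1 : g₀ < w := by
      have := le_max_left g₀ (-h₀ + (π - β')); rw [hw]; linarith
    have hw3 : -h₀ + (π - β') < w := by
      have := le_max_right g₀ (-h₀ + (π - β')); rw [hw]; linarith
    exact absurd ((key w hw1 hw2).2) (by linarith)
  rw [hh₀, hu₀] at *
  linarith


lemma mid_half {β β' p₁ q₁ p₂ q₂ : ℝ} (hβ : β ∈ Ioo 0 π) (hβ' : β' ∈ Ioo 0 π)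
    (hp₂ : 0 < p₂)
    (H : ∀ X Y : ℝ, P β (arctan X) (arctan Y) ↔
      P β' (arctan (p₁ * X + q₁)) (arctan (p₂ * Y + q₂))) :
    arctan (p₂ * tan ((π - β)/2) + q₂) ≤ arctan (p₁ * tan ((π - β)/2) + q₁) + β' ∧
    arctan (p₂ * tan ((π - β)/2) + q₂) ≤ -(arctan (p₁ * tan ((π - β)/2) + q₁)) + (π - β') ∧
    (arctan (p₂ * tan ((π - β)/2) + q₂) = arctan (p₁ * tan ((π - β)/2) + q₁) + β' ∨
     arctan (p₂ * tan ((π - β)/2) + q₂) = -(arctan (p₁ * tan ((π - β)/2) + q₁)) + (π - β')) := by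
  obtain ⟨hβ0, hβπ⟩ := hβ
  obtain ⟨hβ'0, hβ'π⟩ := hβ'
  have hpi := Real.pi_pos
  set s : ℝ := (π - β)/2 with hs
  have hsm : -(π/2) < s := by rw [hs]; linarith
  have hsM : s < π/2 := by rw [hs]; linarith
  set A : ℝ := arctan (p₁ * tan s + q₁) with hA
  set Bv : ℝ := arctan (p₂ * tan s + q₂) with hBv
  have hAm : -(π/2) < A := neg_pi_div_two_lt_arctan _
  have hAM : A < π/2 := arctan_lt_pi_div_two _
  have hBm : -(π/2) < Bv := neg_pi_div_two_lt_arctan _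
  have hBM : Bv < π/2 := arctan_lt_pi_div_two _
  have hmem : P β (arctan (tan s)) (arctan (tan s)) := by
    rw [Real.arctan_tan hsm hsM]
    refine ⟨by linarith, by linarith, ?_, by linarith⟩
    have : -s + (π - β) = s := by rw [hs]; ring
    rw [this]
  have hPB : P β' A Bv := (H (tan s) (tan s)).mp hmem
  obtain ⟨c1, c2, c3, c4⟩ := hPB
  refine ⟨c1, c3, ?_⟩
  by_contra hc
  push_neg at hc
  obtain ⟨hne1, hne2⟩ := hc
  have hlt1 : Bv < A + β' := lt_of_le_of_ne c1 hne1
  have hlt2 : Bv < -A + (π - β') := lt_of_le_of_ne c3 hne2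
  set m : ℝ := min (min (A + β') (-A + (π - β'))) (π/2) with hm
  have hBvm : Bv < m := by
    rw [hm]; exact lt_min (lt_min hlt1 hlt2) hBM
  set w : ℝ := (Bv + m) / 2 with hw
  have hw1 : Bv < w := by rw [hw]; linarith
  have hwM : w < π/2 := by
    have : m ≤ π/2 := min_le_right _ _
    rw [hw]; linarith
  have hw2 : w < A + β' := by
    have h1 : m ≤ A + β' := le_trans (min_le_left _ _) (min_le_left _ _)
    rw [hw]; linarith
  have hw3 : w < -A + (π - β') := by
    have h1 : m ≤ -A + (π - β') := le_trans (min_le_left _ _) (min_le_right _ _)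
    rw [hw]; linarith
  have hwI : w ∈ Ioo (-(π/2)) (π/2) := ⟨by linarith, hwM⟩
  have htw : p₂ * tan s + q₂ < tan w := by
    have := Real.strictMonoOn_tan ⟨hBm, hBM⟩ hwI hw1
    rwa [hBv, Real.tan_arctan] at this
  set Y : ℝ := (tan w - q₂) / p₂ with hY
  have hYs : tan s < Y := by
    rw [hY, lt_div_iff₀ hp₂]
    linarith [mul_comm (tan s) p₂]
  have hs_lt : s < arctan Y := by
    have : arctan (tan s) < arctan Y := Real.arctan_strictMono hYs
    rwa [Real.arctan_tan hsm hsM] at this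
  have hYw : p₂ * Y + q₂ = tan w := by rw [hY]; field_simp; ring
  have hP' : P β' A (arctan (p₂ * Y + q₂)) := by
    rw [hYw, Real.arctan_tan hwI.1 hwI.2]
    exact ⟨le_of_lt hw2, by linarith, le_of_lt hw3, by linarith⟩
  have hback : P β (arctan (tan s)) (arctan Y) := (H (tan s) Y).mpr hP'
  rw [Real.arctan_tan hsm hsM] at hback
  have h3 := hback.2.2.1
  have : -s + (π - β) = s := by rw [hs]; ring
  rw [this] at h3
  linarith

lemma mid {β β' p₁ q₁ p₂ q₂ : ℝ} (hβ : β ∈ Ioo 0 π) (hβ' : β' ∈ Ioo 0 π)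
    (hp₁ : 0 < p₁) (hp₂ : 0 < p₂)
    (H : ∀ X Y : ℝ, P β (arctan X) (arctan Y) ↔
      P β' (arctan (p₁ * X + q₁)) (arctan (p₂ * Y + q₂))) :
    arctan (p₁ * tan ((π - β)/2) + q₁) + arctan (p₂ * tan ((π - β)/2) + q₂) = π - β' := by
  have Hs : ∀ X Y : ℝ, P β (arctan X) (arctan Y) ↔
      P β' (arctan (p₂ * X + q₂)) (arctan (p₁ * Y + q₁)) := by
    intro X Y
    constructor
    · intro h; exact P_swap ((H Y X).mp (P_swap h))
    · intro h; exact P_swap ((H Y X).mpr (P_swap h))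
  obtain ⟨c1, c3, hd⟩ := mid_half hβ hβ' hp₂ H
  obtain ⟨c1', c3', hd'⟩ := mid_half hβ hβ' hp₁ Hs
  have hβ'0 := hβ'.1
  rcases hd with h | h
  · rcases hd' with h' | h'
    · linarith
    · linarith
  · linarith


lemma tan_pdts {β : ℝ} :
    tan (π/2 - β) = ((tan ((π - β)/2))^2 - 1) / (2 * tan ((π - β)/2)) := by
  have hβeq : β = π - 2 * ((π - β)/2) := by ring
  rw [Real.tan_pi_div_two_sub]
  nth_rewrite 1 [hβeq]
  rw [Real.tan_pi_sub, Real.tan_two_mul]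
  rw [inv_neg, inv_div]
  ring



set_option maxHeartbeats 1000000 in
lemma main {β β' p q k : ℝ} (hβ : β ∈ Ioo 0 π) (hβ' : β' ∈ Ioo 0 π)
    (hp : 0 < p) (hk : 0 < k)
    (H : ∀ X Y : ℝ, P β (arctan X) (arctan Y) ↔
      P β' (arctan (p * X + q)) (arctan (k * Y))) :
    β' = β ∧ q = 0 ∧ p * k = 1 ∧ (β ≠ π / 2 → p = 1 ∧ k = 1) := by
  have hpi := Real.pi_pos
  have H0 : ∀ X Y : ℝ, P β (arctan X) (arctan Y) ↔
      P β' (arctan (p * X + q)) (arctan (k * Y + 0)) := by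
    intro X Y; rw [add_zero]; exact H X Y
  have Hneg : ∀ X Y : ℝ, P β (arctan X) (arctan Y) →
      P β' (arctan (p * X + (-q))) (arctan (k * Y + 0)) := by
    intro X Y h
    have h1 : P β (arctan (-X)) (arctan (-Y)) := by
      rw [Real.arctan_neg, Real.arctan_neg]; exact P_neg h
    have h2 := (H0 (-X) (-Y)).mp h1
    have e1 : p * (-X) + q = -(p * X + (-q)) := by ring
    have e2 : k * (-Y) + 0 = -(k * Y + 0) := by ring
    rw [e1, e2, Real.arctan_neg, Real.arctan_neg] at h2
    have := P_neg h2
    simpa using this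
  have Hswap : ∀ X Y : ℝ, P β (arctan X) (arctan Y) →
      P β' (arctan (k * X + 0)) (arctan (p * Y + q)) := by
    intro X Y h
    exact P_swap ((H0 Y X).mp (P_swap h))
  have E1 := corner hβ hβ' hk (fun X Y h => (H0 X Y).mp h)
  have E2 := corner hβ hβ' hk Hneg
  have E3 := corner hβ hβ' hp Hswap
  have hq : q = 0 := by
    have := Real.arctan_injective (E1.trans E2.symm)
    linarith
  subst hq
  have Em := mid hβ hβ' hp hk H0
  simp only [add_zero] at E1 E3 Em
  set s : ℝ := (π - β)/2 with hs
  set s' : ℝ := (π - β')/2 with hs'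
  obtain ⟨hβ0, hβπ⟩ := hβ
  obtain ⟨hβ'0, hβ'π⟩ := hβ'
  have hs0 : 0 < s := by rw [hs]; linarith
  have hsM : s < π/2 := by rw [hs]; linarith
  have hs'0 : 0 < s' := by rw [hs']; linarith
  have hs'M : s' < π/2 := by rw [hs']; linarith
  set T : ℝ := tan s with hT
  set T' : ℝ := tan s' with hT'
  have hT0 : 0 < T := Real.tan_pos_of_pos_of_lt_pi_div_two hs0 hsM
  have hT'0 : 0 < T' := Real.tan_pos_of_pos_of_lt_pi_div_two hs'0 hs'M
  have htb : tan (π/2 - β) = (T^2 - 1)/(2*T) := tan_pdts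
  have htb' : tan (π/2 - β') = (T'^2 - 1)/(2*T') := tan_pdts
  have e1 : p * ((T^2 - 1)/(2*T)) = (T'^2 - 1)/(2*T') := by
    have h := congrArg tan E1
    rw [Real.tan_arctan, htb, htb'] at h
    exact h
  have e3 : k * ((T^2 - 1)/(2*T)) = (T'^2 - 1)/(2*T') := by
    have h := congrArg tan E3
    rw [Real.tan_arctan, htb, htb'] at h
    exact h
  -- cosine of the mid equation
  have hs'arct : arctan T' = s' := Real.arctan_tan (by linarith) hs'M
  have hrhs : π - β' = 2 * s' := by rw [hs']; ring
  have hcos0 := congrArg cos Em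
  rw [hrhs, Real.cos_add, ← hs'arct, Real.cos_two_mul] at hcos0
  rw [Real.cos_arctan, Real.cos_arctan, Real.cos_arctan,
      Real.sin_arctan, Real.sin_arctan] at hcos0
  have hden1 : (0:ℝ) < 1 + (p*T)^2 := by positivity
  have hden2 : (0:ℝ) < 1 + (k*T)^2 := by positivity
  have hden3 : (0:ℝ) < 1 + T'^2 := by positivity
  set al : ℝ := Real.sqrt (1+(p*T)^2) with hal
  set ga : ℝ := Real.sqrt (1+(k*T)^2) with hga
  set de : ℝ := Real.sqrt (1+T'^2) with hde
  have hsq1 : al^2 = 1 + (p*T)^2 := Real.sq_sqrt hden1.le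
  have hsq2 : ga^2 = 1 + (k*T)^2 := Real.sq_sqrt hden2.le
  have hsq3 : de^2 = 1 + T'^2 := Real.sq_sqrt hden3.le
  have hsp1 : (0:ℝ) < al := Real.sqrt_pos.mpr hden1
  have hsp2 : (0:ℝ) < ga := Real.sqrt_pos.mpr hden2
  have hsp3 : (0:ℝ) < de := Real.sqrt_pos.mpr hden3
  have key : (1 - (p*T)*(k*T)) * (1 + T'^2) = (1 - T'^2) * (al * ga) := by
    have hL : 1/al * (1/ga) - (p*T)/al * ((k*T)/ga) = (1 - (p*T)*(k*T))/(al*ga) := by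
      field_simp
    have hR : 2*(1/de)^2 - 1 = (1 - T'^2)/(1 + T'^2) := by
      rw [div_pow, one_pow, hsq3, eq_div_iff hden3.ne']
      field_simp
      ring
    rw [hL, hR] at hcos0
    have h2 := (div_eq_div_iff (by positivity) (by positivity)).mp hcos0
    linear_combination h2
  have hfinal : T' = T → β' = β := by
    intro h
    have : s' = s := Real.injOn_tan ⟨by linarith, hs'M⟩ ⟨by linarith, hsM⟩
      (by rw [← hT', ← hT, h])
    rw [hs, hs'] at this
    linarith
  by_cases hTc : T = 1
  · have hβhalf : β = π/2 := by
      have hx : s = π/4 := by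
        have h1 : arctan (tan s) = arctan 1 := by rw [← hT, hTc]
        rwa [Real.arctan_tan (by linarith) hsM, Real.arctan_one] at h1
      rw [hs] at hx; linarith
    have hT'1 : T' = 1 := by
      have h0 : (T'^2 - 1)/(2*T') = 0 := by
        rw [← e3, hTc]; ring
      have h1 : T'^2 - 1 = 0 :=
        (div_eq_zero_iff.mp h0).resolve_right (by positivity)
      have h3 : (T' - 1) * (T' + 1) = 0 := by linear_combination h1
      rcases mul_eq_zero.mp h3 with h | h
      · linarith
      · linarith
    refine ⟨hfinal (hT'1.trans hTc.symm), rfl, ?_, fun hne => absurd hβhalf hne⟩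
    rw [hTc, hT'1] at key
    linear_combination -key/2
  · have hT2ne : T^2 - 1 ≠ 0 := by
      intro h
      have h3 : (T - 1) * (T + 1) = 0 := by linear_combination h
      rcases mul_eq_zero.mp h3 with h' | h'
      · exact hTc (by linarith)
      · linarith
    have hdivne : (T^2 - 1)/(2*T) ≠ 0 := div_ne_zero hT2ne (by positivity)
    have hkp : k = p := (mul_right_cancel₀ hdivne (e1.trans e3.symm)).symm
    subst hkp
    have halga : al * ga = 1 + (k*T)^2 := by
      have hgal : ga = al := rfl
      rw [hgal, ← sq, hsq1]
    rw [halga] at key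
    have hT'sq : T'^2 = (k*T)^2 := by linear_combination key/2
    have hT'kT : T' = k * T := by
      have h1 : (T' - k*T) * (T' + k*T) = 0 := by linear_combination hT'sq
      have hkT : 0 < k * T := mul_pos hk hT0
      rcases mul_eq_zero.mp h1 with h | h
      · linarith
      · linarith
    have hk1 : k = 1 := by
      rw [hT'kT, ← mul_div_assoc] at e3
      have hcl := (div_eq_div_iff (by positivity) (by positivity : (2*(k*T) : ℝ) ≠ 0)).mp e3
      have h2 : (2*T) * (k^2) = (2*T) * 1 := by linear_combination -hcl
      have hk2 : k^2 = 1 := mul_left_cancel₀ (by positivity) h2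
      have h3 : (k - 1) * (k + 1) = 0 := by linear_combination hk2
      rcases mul_eq_zero.mp h3 with h | h
      · linarith
      · linarith
    refine ⟨hfinal (by rw [hT'kT, hk1, one_mul]), rfl, by rw [hk1]; ring,
      fun _ => ⟨hk1, hk1⟩⟩


lemma mem_iff_gen (A₁ A₂ A₃ A₄ B₁ B₂ βx : ℝ) (x : ℝ × ℝ × ℝ × ℝ)
    (hx1 : 0 < x.1) (hx3 : 0 < x.2.2.1)
    (h1 : 0 < A₁ * x.1 + B₁) (h3 : 0 < A₃ * x.2.2.1) (u v : ℝ)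
    (hu : (A₂ * x.2.1 + B₂) / (A₁ * x.1 + B₁) = u)
    (hv : (A₄ * x.2.2.2) / (A₃ * x.2.2.1) = v) :
    (x ∈ {y : ℝ × ℝ × ℝ × ℝ | y ∈ R40 ∧
      (A₁ * y.1 + B₁, A₂ * y.2.1 + B₂, A₃ * y.2.2.1, A₄ * y.2.2.2) ∈ calA βx}) ↔
    P βx (arctan u) (arctan v) := by
  simp only [mem_setOf_eq, calA, R40, Abeta, mem_Ioo]
  rw [hu, hv]
  unfold P
  constructor
  · rintro ⟨-, -, -, -, c1, c2, c3, c4⟩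
    exact ⟨c1, c2, c3, c4⟩
  · rintro ⟨c1, c2, c3, c4⟩
    exact ⟨⟨hx1, hx3⟩, ⟨h1, h3⟩,
      ⟨neg_pi_div_two_lt_arctan _, arctan_lt_pi_div_two _⟩,
      ⟨neg_pi_div_two_lt_arctan _, arctan_lt_pi_div_two _⟩, c1, c2, c3, c4⟩

end S19

/-- Croke–Kleiner, Corollary `geodata`.
Pick `aᵢ > 0`, `b₁ > 0`, `b₂ ∈ ℝ` and a subset `ℬ ⊆ ℝ⁴₀`, and suppose there is a
`β ∈ (0,π)` such that `ℬ` is precisely the set of `(x₁,x₂,x₃,x₄) ∈ ℝ⁴₀` with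
`(a₁x₁+b₁, a₂x₂+b₂, a₃x₃, a₄x₄) ∈ 𝒜_β`.  Then `β`, `b₁/a₁` and `b₂/a₂` are
uniquely determined by `ℬ`; if moreover `β ≠ π/2`, then `b₁/a₂` and `b₂/a₁` are
also uniquely determined by `ℬ`. -/
theorem statement_19
    (a₁ a₂ a₃ a₄ : ℝ) (ha₁ : 0 < a₁) (ha₂ : 0 < a₂) (ha₃ : 0 < a₃) (ha₄ : 0 < a₄)
    (b₁ : ℝ) (hb₁ : 0 < b₁) (b₂ : ℝ)
    (B : Set (ℝ × ℝ × ℝ × ℝ)) (β : ℝ) (hβ : β ∈ Ioo 0 π)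
    (hB : B = {x | x ∈ R40 ∧
      (a₁ * x.1 + b₁, a₂ * x.2.1 + b₂, a₃ * x.2.2.1, a₄ * x.2.2.2) ∈ calA β})
    (a₁' a₂' a₃' a₄' : ℝ) (ha₁' : 0 < a₁') (ha₂' : 0 < a₂') (ha₃' : 0 < a₃') (ha₄' : 0 < a₄')
    (b₁' : ℝ) (hb₁' : 0 < b₁') (b₂' : ℝ) (β' : ℝ) (hβ' : β' ∈ Ioo 0 π)
    (hB' : B = {x | x ∈ R40 ∧
      (a₁' * x.1 + b₁', a₂' * x.2.1 + b₂', a₃' * x.2.2.1, a₄' * x.2.2.2) ∈ calA β'}) :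
    β' = β ∧ b₁' / a₁' = b₁ / a₁ ∧ b₂' / a₂' = b₂ / a₂ ∧
      (β ≠ π / 2 → b₁' / a₂' = b₁ / a₂ ∧ b₂' / a₁' = b₂ / a₁) := by
  have hpi := Real.pi_pos
  have hk : 0 < a₃ * a₄' / (a₃' * a₄) := div_pos (mul_pos ha₃ ha₄') (mul_pos ha₃' ha₄)
  have KE : ∀ r : ℝ, 0 < r → ∀ X Y : ℝ,
      S19.P β (arctan X) (arctan Y) ↔
      S19.P β' (arctan ((a₂' * (a₁ * r + b₁) / (a₂ * (a₁' * r + b₁'))) * X +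
        (a₂ * b₂' - a₂' * b₂) / (a₂ * (a₁' * r + b₁'))))
        (arctan ((a₃ * a₄' / (a₃' * a₄)) * Y)) := by
    intro r hr X Y
    have hd1 : 0 < a₁ * r + b₁ := by nlinarith
    have hd1' : 0 < a₁' * r + b₁' := by nlinarith
    have m1 := S19.mem_iff_gen a₁ a₂ a₃ a₄ b₁ b₂ β
      (r, ((a₁ * r + b₁) * X - b₂) / a₂, 1, Y * a₃ / a₄) hr one_pos
      (by nlinarith) (by nlinarith) X Y
      (by show (a₂ * (((a₁ * r + b₁) * X - b₂) / a₂) + b₂) / (a₁ * r + b₁) = X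
          field_simp
          ring)
      (by show (a₄ * (Y * a₃ / a₄)) / (a₃ * 1) = Y
          field_simp)
    have m2 := S19.mem_iff_gen a₁' a₂' a₃' a₄' b₁' b₂' β'
      (r, ((a₁ * r + b₁) * X - b₂) / a₂, 1, Y * a₃ / a₄) hr one_pos
      (by nlinarith) (by nlinarith)
      ((a₂' * (a₁ * r + b₁) / (a₂ * (a₁' * r + b₁'))) * X +
        (a₂ * b₂' - a₂' * b₂) / (a₂ * (a₁' * r + b₁')))
      ((a₃ * a₄' / (a₃' * a₄)) * Y)
      (by show (a₂' * (((a₁ * r + b₁) * X - b₂) / a₂) + b₂') / (a₁' * r + b₁') = _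
          field_simp
          ring)
      (by show (a₄' * (Y * a₃ / a₄)) / (a₃' * 1) = _
          field_simp)
    rw [← m1, ← m2, ← hB, ← hB']
  have hp1pos : 0 < a₂' * (a₁ * 1 + b₁) / (a₂ * (a₁' * 1 + b₁')) :=
    div_pos (mul_pos ha₂' (by nlinarith)) (mul_pos ha₂ (by nlinarith))
  have hp2pos : 0 < a₂' * (a₁ * 2 + b₁) / (a₂ * (a₁' * 2 + b₁')) :=
    div_pos (mul_pos ha₂' (by nlinarith)) (mul_pos ha₂ (by nlinarith))
  obtain ⟨hββ, hq1, hpk1, hcr1⟩ := S19.main hβ hβ' hp1pos hk (KE 1 one_pos)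
  obtain ⟨-, -, hpk2, hcr2⟩ := S19.main hβ hβ' hp2pos hk (KE 2 two_pos)
  -- b₂ ratio
  have hden1 : a₂ * (a₁' * 1 + b₁') ≠ 0 := ne_of_gt (mul_pos ha₂ (by nlinarith))
  have hden2 : a₂ * (a₁' * 2 + b₁') ≠ 0 := ne_of_gt (mul_pos ha₂ (by nlinarith))
  have e_b2 : a₂ * b₂' = a₂' * b₂ := by
    have h := (div_eq_zero_iff.mp hq1).resolve_right hden1
    linarith
  have goal3 : b₂' / a₂' = b₂ / a₂ := by
    rw [div_eq_div_iff ha₂'.ne' ha₂.ne']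
    linear_combination e_b2
  have hp12 : a₂' * (a₁ * 1 + b₁) / (a₂ * (a₁' * 1 + b₁')) =
      a₂' * (a₁ * 2 + b₁) / (a₂ * (a₁' * 2 + b₁')) :=
    mul_right_cancel₀ (ne_of_gt hk) (hpk1.trans hpk2.symm)
  have h12 := (div_eq_div_iff hden1 hden2).mp hp12
  have e_b1 : a₁' * b₁ = a₁ * b₁' :=
    mul_left_cancel₀ (ne_of_gt (mul_pos ha₂ ha₂')) (by linear_combination h12)
  have goal2 : b₁' / a₁' = b₁ / a₁ := by
    rw [div_eq_div_iff ha₁'.ne' ha₁.ne']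
    linear_combination -e_b1
  refine ⟨hββ, goal2, goal3, fun hne => ?_⟩
  obtain ⟨hp1, hk1⟩ := hcr1 hne
  obtain ⟨hp2, -⟩ := hcr2 hne
  rw [div_eq_iff hden1] at hp1
  rw [div_eq_iff hden2] at hp2
  have e_ca : a₂' * a₁ = a₂ * a₁' := by linear_combination hp2 - hp1
  have e_cb : a₂' * b₁ = a₂ * b₁' := by linear_combination 2 * hp1 - hp2
  constructor
  · rw [div_eq_div_iff ha₂'.ne' ha₂.ne']
    linear_combination -e_cb
  · rw [div_eq_div_iff ha₁'.ne' ha₁.ne']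
    exact mul_left_cancel₀ ha₂'.ne'
      (by linear_combination a₁' * e_b2 + b₂' * e_ca)
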